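/- For every polyomino P, the singleton team {P} is a winner in the weak (1,2)-achievement game if and only if P has size at most 2. -/

import Mathlib

/-- A cell of the rectangular board. -/
abbrev Cell : Type := ℤ × ℤ

/-- Two cells are adjacent if they differ by (±1,0) or (0,±1). -/
def Adjacent (a b : Cell) : Prop :=
  (a.1 - b.1).natAbs + (a.2 - b.2).natAbs = 1

/-- A polyomino is a nonempty subset of ℤ² connected through adjacent cells. -/
def IsPolyomino (P : Set Cell) : Prop :=
  P.Nonempty ∧ ∀ a ∈ P, ∀ b ∈ P,
    Relation.ReflTransGen (fun x y => x ∈ P ∧ y ∈ P ∧ Adjacent x y) a b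

/-- Symmetries of the board: compositions of an integer translation with one of the
eight signed/swap linear maps (rotations by multiples of 90° and reflections). -/
def IsSym (f : Cell → Cell) : Prop :=
  ∃ (t : Cell) (a b s : Bool), ∀ p : Cell,
    f p = (t.1 + (if a then (if s then p.2 else p.1) else -(if s then p.2 else p.1)),
           t.2 + (if b then (if s then p.1 else p.2) else -(if s then p.1 else p.2)))

/-- Two subsets of ℤ² are congruent if one is the image of the other under a symmetry. -/
def CellCongruent (A B : Set Cell) : Prop := ∃ f, IsSym f ∧ f '' A = B

/-- `Ancestor P Q` (written P ⊑ Q): `Q` contains a subset congruent to `P`. -/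
def Ancestor (P Q : Set Cell) : Prop := ∃ S, S ⊆ Q ∧ CellCongruent P S

/-- `Simpler S T` (written S ⪯ T): every member of `T` has an ancestor in `S`. -/
def Simpler (S T : Set (Set Cell)) : Prop := ∀ Q ∈ T, ∃ P ∈ S, Ancestor P Q

/-- A team: a set of polyominoes no member of which is an ancestor of another member. -/
def IsTeam (F : Set (Set Cell)) : Prop :=
  (∀ P ∈ F, IsPolyomino P) ∧ ∀ P ∈ F, ∀ Q ∈ F, P ≠ Q → ¬ Ancestor P Q

/-- The cells marked so far, given the list of the maker's moves and
the list of the breaker's (pairs of) moves. -/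
def markedCells (ms : List Cell) (bs : List (Cell × Cell)) : Set Cell :=
  {c | c ∈ ms ∨ ∃ p ∈ bs, c = p.1 ∨ c = p.2}

/-- Maker strategy: from the maker's past moves and the breaker's past moves,
produce the maker's next mark. -/
abbrev MStrategy := List Cell → List (Cell × Cell) → Cell

/-- Breaker strategy: from the maker's moves so far (including his latest one) and the
breaker's past moves, produce the breaker's next two marks. -/
abbrev BStrategy := List Cell → List (Cell × Cell) → Cell × Cell

/-- A legal maker strategy always marks a previously unmarked cell. -/
def MLegal (σ : MStrategy) : Prop := ∀ ms bs, σ ms bs ∉ markedCells ms bs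

/-- A legal breaker strategy always marks two distinct previously unmarked cells. -/
def BLegal (τ : BStrategy) : Prop :=
  ∀ ms bs, (τ ms bs).1 ≠ (τ ms bs).2 ∧
    (τ ms bs).1 ∉ markedCells ms bs ∧ (τ ms bs).2 ∉ markedCells ms bs

/-- The lists of moves after `n` full rounds of the weak (1,2)-achievement game,
the maker moving first in each round. -/
def play (σ : MStrategy) (τ : BStrategy) : ℕ → List Cell × List (Cell × Cell)
  | 0 => ([], [])
  | n + 1 =>
      let p := play σ τ n
      let mv := σ p.1 p.2
      (p.1 ++ [mv], p.2 ++ [τ (p.1 ++ [mv]) p.2])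

/-- The set of cells marked by the maker during the first `n` rounds. -/
def makerSet (σ : MStrategy) (τ : BStrategy) (n : ℕ) : Set Cell :=
  {c | c ∈ (play σ τ n).1}

/-- The maker achieves `F` in the play of `σ` against `τ`: at some finite stage his
marked cells contain a subset congruent to a member of `F`. -/
def Achieves (F : Set (Set Cell)) (σ : MStrategy) (τ : BStrategy) : Prop :=
  ∃ n, ∃ Q ∈ F, Ancestor Q (makerSet σ τ n)

/-- A (bounded) set of polyominoes is a winner of the weak (1,2)-achievement game if the
maker has a legal strategy achieving it against every legal breaker strategy. -/
def GameWinner (F : Set (Set Cell)) : Prop :=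
  ∃ σ, MLegal σ ∧ ∀ τ, BLegal τ → Achieves F σ τ

/-- A set of polyominoes is bounded if all its members are finite. -/
def Bounded (F : Set (Set Cell)) : Prop := ∀ P ∈ F, P.Finite

/-- `G` is a bounded restriction of `T`: `G = {F_P : P ∈ T}` for a choice of a finite
polyomino ancestor `F_P ⊑ P` for each `P ∈ T`. -/
def BoundedRestriction (T G : Set (Set Cell)) : Prop :=
  ∃ f : Set Cell → Set Cell,
    (∀ P ∈ T, (f P).Finite ∧ IsPolyomino (f P) ∧ Ancestor (f P) P) ∧ G = f '' T

/-- Winner for a possibly unbounded set of polyominoes: a bounded set is a winner if the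
maker can achieve it; an unbounded set is a winner if every bounded restriction is. -/
def Winner (F : Set (Set Cell)) : Prop :=
  (Bounded F ∧ GameWinner F) ∨
  (¬ Bounded F ∧ ∀ G, BoundedRestriction F G → GameWinner G)

/-- The skinny polyomino `S_n`: `n` cells in a horizontal row. -/
def Srow (n : ℕ) : Set Cell := {p | 0 ≤ p.1 ∧ p.1 < (n : ℤ) ∧ p.2 = 0}

/-- The one-way infinite skinny polyomino `S_∞`. -/
def Sinf : Set Cell := {p | 0 ≤ p.1 ∧ p.2 = 0}

/-- The L-tromino `L_2`. -/
def L2 : Set Cell := {(0, 0), (1, 0), (1, 1)}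

/-- The L-tetromino `L_3`. -/
def L3 : Set Cell := {(0, 0), (1, 0), (2, 0), (2, 1)}

/-- The T-tetromino `T_2`. -/
def T2 : Set Cell := {(0, 0), (1, 0), (2, 0), (1, 1)}

/-- The 2×2 square tetromino `C_2`. -/
def C2 : Set Cell := {(0, 0), (1, 0), (0, 1), (1, 1)}

/-- The S-tetromino `Z_2`. -/
def Z2 : Set Cell := {(0, 0), (1, 0), (1, 1), (2, 1)}

/-- `C_n`: a horizontal row of `n` cells plus the cells above its two end cells. -/
def Cpoly (n : ℕ) : Set Cell :=
  {p | 0 ≤ p.1 ∧ p.1 < (n : ℤ) ∧ p.2 = 0} ∪ {(0, 1), ((n : ℤ) - 1, 1)}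

/-- `Z_n`: a horizontal row of `n` cells plus the cell above one end cell and the cell
below the other end cell. -/
def Zpoly (n : ℕ) : Set Cell :=
  {p | 0 ≤ p.1 ∧ p.1 < (n : ℤ) ∧ p.2 = 0} ∪ {(0, 1), ((n : ℤ) - 1, -1)}

/-- A polyomino is skinny if all its cells lie in one row or one column. -/
def Skinny (P : Set Cell) : Prop :=
  (∃ r, ∀ p ∈ P, p.2 = r) ∨ (∃ c, ∀ p ∈ P, p.1 = c)

/-- A 2-paving: an irreflexive symmetric relation on cells in which every cell is
related to at most two other cells. -/
def TwoPaving (R : Cell → Cell → Prop) : Prop :=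
  (∀ a, ¬ R a a) ∧ (∀ a b, R a b → R b a) ∧
  ∀ a, ∃ b c, ∀ d, R a d → d = b ∨ d = c

/-- The paving strategy based on `R`: a legal breaker strategy that marks every currently
unmarked cell related by `R` to the maker's last move. -/
def PavingStrategy (R : Cell → Cell → Prop) (τ : BStrategy) : Prop :=
  BLegal τ ∧ ∀ ms bs, ∀ last ∈ ms.getLast?, ∀ c, R last c →
    c ∉ markedCells ms bs → (c = (τ ms bs).1 ∨ c = (τ ms bs).2)

/-- `Q` is killed by `R`: every subset of ℤ² congruent to `Q` contains two related cells. -/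
def Killed (R : Cell → Cell → Prop) (Q : Set Cell) : Prop :=
  ∀ S : Set Cell, CellCongruent Q S → ∃ a ∈ S, ∃ b ∈ S, R a b

/-- The unbounded team `W = {S_∞, T_2} ∪ {C_n : n ≥ 2} ∪ {Z_n : n ≥ 2}`. -/
def Wteam : Set (Set Cell) :=
  {Sinf, T2} ∪ {P | ∃ n, 2 ≤ n ∧ P = Cpoly n} ∪ {P | ∃ n, 2 ≤ n ∧ P = Zpoly n}

/-!
A polyomino with at most two cells is a cell or a domino, and the maker owns a domino after two
moves: the breaker's two marks cannot cover all four neighbours of the maker's first cell.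

A polyomino with three or more cells contains a tromino, straight or bent. Against it the breaker
plays a paving strategy: every cell has at most two partners, and the breaker answers each move
of the maker by marking the unmarked partners of that cell, so the maker never owns two partners.
Pairing every cell with its two horizontal neighbours kills all bent trominoes, since one of
their two dominoes is horizontal; pairing the cells of the dominoes `{(2k, j), (2k+1, j)}` and
`{(i, 2k), (i, 2k+1)}` kills all straight trominoes, since three consecutive integers contain
such a pair. When the polyomino is infinite, the same breaker defeats its bounded restriction to
a tromino.
-/

theorem Adjacent.symm {p q : Cell} (h : Adjacent p q) : Adjacent q p := by
  unfold Adjacent at *; omega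

theorem Adjacent.ne {p q : Cell} (h : Adjacent p q) : p ≠ q := by
  rintro rfl; simp [Adjacent] at h

theorem adjacent_iff_sub {p q : Cell} :
    Adjacent p q ↔ q - p = (1, 0) ∨ q - p = (-1, 0) ∨ q - p = (0, 1) ∨ q - p = (0, -1) := by
  simp only [Adjacent, Prod.ext_iff, Prod.fst_sub, Prod.snd_sub]
  omega

def linSym (a b s : Bool) : Cell →+ Cell where
  toFun p := (if a then (if s then p.2 else p.1) else -(if s then p.2 else p.1),
              if b then (if s then p.1 else p.2) else -(if s then p.1 else p.2))
  map_zero' := by cases a <;> cases b <;> cases s <;> rfl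
  map_add' p q := by
    cases a <;> cases b <;> cases s <;> simp only [Prod.ext_iff] <;> simp <;> omega

theorem linSym_injective (a b s : Bool) : Function.Injective (linSym a b s) := by
  intro p q h
  cases a <;> cases b <;> cases s <;> simp [linSym, Prod.ext_iff] at h <;> ext <;> omega

theorem isSym_iff {f : Cell → Cell} :
    IsSym f ↔ ∃ t a b s, f = fun p => t + linSym a b s p := by
  simp only [IsSym, funext_iff]
  rfl

theorem IsSym.add_eq_add_iff {f : Cell → Cell} (hf : IsSym f) {x y z w : Cell} :
    f x + f z = f y + f w ↔ x + z = y + w := by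
  obtain ⟨t, a, b, s, rfl⟩ := isSym_iff.mp hf
  dsimp only
  rw [add_add_add_comm, add_add_add_comm t (linSym a b s y), add_right_inj, ← map_add,
    ← map_add, (linSym_injective a b s).eq_iff]

theorem IsSym.injective {f : Cell → Cell} (hf : IsSym f) : Function.Injective f := by
  intro x y h
  simpa using (hf.add_eq_add_iff (z := 0) (w := 0)).mp (by rw [h])

theorem IsSym.adjacent {f : Cell → Cell} (hf : IsSym f) {p q : Cell} (h : Adjacent p q) :
    Adjacent (f p) (f q) := by
  obtain ⟨t, a, b, s, rfl⟩ := isSym_iff.mp hf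
  rw [adjacent_iff_sub, add_sub_add_left_eq_sub, ← map_sub]
  rcases adjacent_iff_sub.mp h with h | h | h | h <;> rw [h] <;>
    cases a <;> cases b <;> cases s <;> simp [linSym]

theorem exists_linSym_eq {u w : Cell}
    (hu : u = (1, 0) ∨ u = (-1, 0) ∨ u = (0, 1) ∨ u = (0, -1))
    (hw : w = (1, 0) ∨ w = (-1, 0) ∨ w = (0, 1) ∨ w = (0, -1)) :
    ∃ a b s, linSym a b s u = w := by
  rcases hu with rfl | rfl | rfl | rfl <;> rcases hw with rfl | rfl | rfl | rfl <;> decide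

theorem cellCongruent_refl (A : Set Cell) : CellCongruent A A :=
  ⟨id, ⟨0, true, true, false, fun p => by simp⟩, Set.image_id A⟩

theorem cellCongruent_singleton (p r : Cell) : CellCongruent {p} {r} :=
  ⟨fun x => (r - p) + linSym true true false x, isSym_iff.mpr ⟨_, _, _, _, rfl⟩, by
    simp [linSym]⟩

theorem cellCongruent_pair {p q r s : Cell} (hpq : Adjacent p q) (hrs : Adjacent r s) :
    CellCongruent {p, q} {r, s} := by
  obtain ⟨a, b, c, h⟩ := exists_linSym_eq (adjacent_iff_sub.mp hpq) (adjacent_iff_sub.mp hrs)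
  refine ⟨fun x => (r - linSym a b c p) + linSym a b c x,
    isSym_iff.mpr ⟨_, _, _, _, rfl⟩, ?_⟩
  rw [Set.image_pair]
  congr 2
  · abel
  · rw [sub_add_eq_add_sub, add_sub_assoc, ← map_sub, h]; abel

theorem Relation.ReflTransGen.exists_step_mem_notMem {α : Type*} {r : α → α → Prop}
    {s : Set α} {a b : α} (h : Relation.ReflTransGen r a b) (ha : a ∈ s) (hb : b ∉ s) :
    ∃ c ∈ s, ∃ d ∉ s, r c d := by
  induction h with
  | refl => exact absurd ha hb
  | @tail c d _ hcd ih =>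
    by_cases hc : c ∈ s
    · exact ⟨c, hc, d, hb, hcd⟩
    · exact ih hc

theorem IsPolyomino.exists_adjacent_of_not_subset {P s : Set Cell} (hP : IsPolyomino P)
    {a : Cell} (ha : a ∈ P) (has : a ∈ s) (hPs : ¬ P ⊆ s) :
    ∃ c ∈ s, ∃ d ∈ P, d ∉ s ∧ Adjacent c d := by
  obtain ⟨b, hb, hbs⟩ := Set.not_subset.mp hPs
  obtain ⟨c, hc, d, hd, -, hdP, hcd⟩ := (hP.2 a ha b hb).exists_step_mem_notMem has hbs
  exact ⟨c, hc, d, hdP, hd, hcd⟩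

theorem IsPolyomino.eq_singleton_or_pair {P : Set Cell} (hP : IsPolyomino P)
    (h2 : P.encard ≤ 2) : (∃ p, P = {p}) ∨ ∃ p q, Adjacent p q ∧ P = {p, q} := by
  obtain ⟨p, hp⟩ := hP.1
  by_cases hPp : P ⊆ {p}
  · exact Or.inl ⟨p, hPp.antisymm (Set.singleton_subset_iff.mpr hp)⟩
  obtain ⟨c, hc, q, hq, -, hpq⟩ :=
    hP.exists_adjacent_of_not_subset hp (Set.mem_singleton p) hPp
  rw [Set.mem_singleton_iff] at hc
  subst c
  have hsub : {p, q} ⊆ P := Set.insert_subset hp (Set.singleton_subset_iff.mpr hq)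
  refine Or.inr ⟨p, q, hpq, (Set.Finite.eq_of_subset_of_encard_le (by simp) hsub ?_).symm⟩
  rwa [Set.encard_pair hpq.ne]

theorem IsPolyomino.exists_tromino {P : Set Cell} (hP : IsPolyomino P) (h3 : 2 < P.encard) :
    ∃ x ∈ P, ∃ y ∈ P, ∃ z ∈ P, Adjacent x y ∧ Adjacent y z ∧ x ≠ z := by
  obtain ⟨a, ha⟩ := hP.1
  have hsmall {s : Set Cell} (hs : s.encard ≤ 2) : ¬ P ⊆ s := fun h =>
    (Set.encard_le_encard h).trans hs |>.not_gt h3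
  obtain ⟨c, hc, b, hb, -, hab⟩ :=
    hP.exists_adjacent_of_not_subset ha (Set.mem_singleton a) (hsmall (by simp))
  rw [Set.mem_singleton_iff] at hc
  subst c
  obtain ⟨c, hc, d, hd, hdab, hcd⟩ := hP.exists_adjacent_of_not_subset (s := {a, b}) ha
    (by simp) (hsmall ((Set.encard_insert_le _ _).trans (by norm_num)))
  simp only [Set.mem_insert_iff, Set.mem_singleton_iff, not_or] at hc hdab
  rcases hc with rfl | rfl
  · exact ⟨b, hb, c, ha, d, hd, hab.symm, hcd, fun h => hdab.2 h.symm⟩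
  · exact ⟨a, ha, c, hb, d, hd, hab, hcd, fun h => hdab.1 h.symm⟩

theorem isPolyomino_singleton (c : Cell) : IsPolyomino {c} :=
  ⟨Set.singleton_nonempty c, by rintro a rfl b rfl; exact .refl⟩

theorem IsPolyomino.insert_of_adjacent {P : Set Cell} (hP : IsPolyomino P) {a b : Cell}
    (hb : b ∈ P) (hab : Adjacent a b) : IsPolyomino (insert a P) := by
  refine ⟨⟨a, Set.mem_insert a P⟩, ?_⟩
  set r := fun x y => x ∈ insert a P ∧ y ∈ insert a P ∧ Adjacent x y
  have hlift {u v : Cell} (hu : u ∈ P) (hv : v ∈ P) : Relation.ReflTransGen r u v :=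
    Relation.ReflTransGen.mono (fun _ _ ⟨hx, hy, hxy⟩ => ⟨Or.inr hx, Or.inr hy, hxy⟩) _ _
      (hP.2 u hu v hv)
  have hab' : r a b := ⟨Set.mem_insert a P, Or.inr hb, hab⟩
  have hba' : r b a := ⟨Or.inr hb, Set.mem_insert a P, hab.symm⟩
  rintro u (rfl | hu) v (rfl | hv)
  · exact .refl
  · exact .head hab' (hlift hb hv)
  · exact (hlift hu hb).tail hba'
  · exact hlift hu hv

theorem markedCells_finite (ms : List Cell) (bs : List (Cell × Cell)) :
    (markedCells ms bs).Finite := by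
  refine (ms ++ bs.map Prod.fst ++ bs.map Prod.snd).finite_toSet.subset ?_
  rintro c (h | ⟨p, hp, rfl | rfl⟩)
  · exact List.mem_append_left _ (List.mem_append_left _ h)
  · exact List.mem_append_left _ (List.mem_append_right _ (List.mem_map_of_mem hp))
  · exact List.mem_append_right _ (List.mem_map_of_mem hp)

theorem markedCells_mono {ms ms' : List Cell} {bs bs' : List (Cell × Cell)} (hms : ms ⊆ ms')
    (hbs : bs ⊆ bs') : markedCells ms bs ⊆ markedCells ms' bs' := by
  rintro c (h | ⟨p, hp, h⟩)
  exacts [Or.inl (hms h), Or.inr ⟨p, hbs hp, h⟩]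

theorem exists_notMem_markedCells (ms : List Cell) (bs : List (Cell × Cell)) :
    ∃ c, c ∉ markedCells ms bs :=
  (markedCells_finite ms bs).infinite_compl.nonempty

theorem exists_adjacent_ne_ne (c a b : Cell) : ∃ d, Adjacent c d ∧ d ≠ a ∧ d ≠ b := by
  by_contra! h
  have h1 := h (c.1 + 1, c.2) (by simp [Adjacent])
  have h2 := h (c.1 - 1, c.2) (by simp [Adjacent])
  have h3 := h (c.1, c.2 + 1) (by simp [Adjacent])
  simp only [ne_eq, Prod.ext_iff] at h1 h2 h3
  omega

open Classical in
noncomputable def neighbourMaker : MStrategy := fun ms bs =>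
  if h : ∃ c ∉ markedCells ms bs, ∃ m ∈ ms, Adjacent m c then h.choose
  else (exists_notMem_markedCells ms bs).choose

theorem neighbourMaker_legal : MLegal neighbourMaker := by
  intro ms bs
  unfold neighbourMaker
  split_ifs with h
  exacts [h.choose_spec.1, (exists_notMem_markedCells ms bs).choose_spec]

theorem neighbourMaker_adjacent (τ : BStrategy) :
    ∃ c ∈ makerSet neighbourMaker τ 2, ∃ d ∈ makerSet neighbourMaker τ 2,
      Adjacent c d := by
  set c := neighbourMaker [] []
  set t := τ [c] []
  have hplay : (play neighbourMaker τ 2).1 = [c, neighbourMaker [c] [t]] := rfl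
  have hfree : ∃ d ∉ markedCells [c] [t], ∃ m ∈ [c], Adjacent m d := by
    obtain ⟨d, hcd, hd1, hd2⟩ := exists_adjacent_ne_ne c t.1 t.2
    refine ⟨d, ?_, c, List.mem_singleton_self c, hcd⟩
    simp [markedCells, hcd.ne.symm, hd1, hd2]
  have hd : neighbourMaker [c] [t] = hfree.choose := dif_pos hfree
  obtain ⟨-, m, hm, hmd⟩ := hfree.choose_spec
  rw [List.mem_singleton] at hm
  subst hm
  refine ⟨c, ?_, hfree.choose, ?_, hmd⟩ <;> simp [makerSet, hplay, hd]

theorem exists_pair_notMem_superset {α : Type*} [Infinite α] {M N : Set α} (hM : M.Finite)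
    {b c : α} (hN : N ⊆ {b, c}) (hNM : Disjoint N M) :
    ∃ x y, x ≠ y ∧ x ∉ M ∧ y ∉ M ∧ N ⊆ {x, y} := by
  have h2 : N.ncard ≤ 2 :=
    (Set.ncard_le_ncard hN).trans ((Set.ncard_insert_le b {c}).trans (by simp))
  obtain ⟨N', hNN', hN'M, hcard⟩ := hM.infinite_compl.exists_superset_ncard_eq
    (Set.subset_compl_iff_disjoint_right.mpr hNM) ((Set.toFinite {b, c}).subset hN) h2
  obtain ⟨x, y, hxy, rfl⟩ := Set.ncard_eq_two.mp hcard
  exact ⟨x, y, hxy, hN'M (by simp), hN'M (by simp), hNN'⟩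

theorem TwoPaving.exists_pavingStrategy {R : Cell → Cell → Prop} (hR : TwoPaving R) :
    ∃ τ, PavingStrategy R τ := by
  have hmove (ms : List Cell) (bs : List (Cell × Cell)) : ∃ xy : Cell × Cell,
      xy.1 ≠ xy.2 ∧ xy.1 ∉ markedCells ms bs ∧ xy.2 ∉ markedCells ms bs ∧
      ∀ last ∈ ms.getLast?, ∀ c, R last c → c ∉ markedCells ms bs →
        c = xy.1 ∨ c = xy.2 := by
    obtain ⟨b, c, hbc⟩ :
        ∃ b c, ∀ d, (∃ last ∈ ms.getLast?, R last d) → d = b ∨ d = c := by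
      cases ms.getLast? with
      | none => exact ⟨0, 0, by simp⟩
      | some last =>
        obtain ⟨b, c, h⟩ := hR.2.2 last
        exact ⟨b, c, by simpa using h⟩
    obtain ⟨x, y, hxy, hx, hy, hN⟩ := exists_pair_notMem_superset (markedCells_finite ms bs)
      (N := {d | (∃ last ∈ ms.getLast?, R last d) ∧ d ∉ markedCells ms bs})
      (fun d hd => hbc d hd.1) (Set.disjoint_left.mpr fun _ hd => hd.2)
    exact ⟨(x, y), hxy, hx, hy, fun last hl d hd hdm => hN ⟨⟨last, hl, hd⟩, hdm⟩⟩
  choose τ hτ using hmove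
  exact ⟨τ, fun ms bs => ⟨(hτ ms bs).1, (hτ ms bs).2.1, (hτ ms bs).2.2.1⟩,
    fun ms bs => (hτ ms bs).2.2.2⟩

theorem PavingStrategy.related_marked {R : Cell → Cell → Prop} {τ : BStrategy} {σ : MStrategy}
    (hR : TwoPaving R) (hτ : PavingStrategy R τ) (hσ : MLegal σ) (n : ℕ) :
    ∀ m ∈ (play σ τ n).1, ∀ d, R m d →
      d ∈ markedCells (play σ τ n).1 (play σ τ n).2 ∧ d ∉ (play σ τ n).1 := by
  induction n with
  | zero => simp [play]
  | succ n ih =>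
    simp only [play]
    generalize play σ τ n = p at ih ⊢
    obtain ⟨L, B⟩ := p
    set mv := σ L B
    set tv := τ (L ++ [mv]) B
    have hmv : mv ∉ markedCells L B := hσ L B
    have hold : markedCells L B ⊆ markedCells (L ++ [mv]) (B ++ [tv]) :=
      markedCells_mono (List.subset_append_left _ _) (List.subset_append_left _ _)
    have hnew : markedCells (L ++ [mv]) B ⊆ markedCells (L ++ [mv]) (B ++ [tv]) :=
      markedCells_mono (List.Subset.refl _) (List.subset_append_left _ _)
    intro m hm d hmd
    rcases List.mem_append.mp hm with hm | hm
    · obtain ⟨hd, hdL⟩ := ih m hm d hmd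
      refine ⟨hold hd, ?_⟩
      rw [List.mem_append, List.mem_singleton]
      rintro (h | rfl)
      exacts [hdL h, hmv hd]
    · rw [List.mem_singleton] at hm
      subst hm
      refine ⟨?_, ?_⟩
      · by_cases hd : d ∈ markedCells (L ++ [mv]) B
        · exact hnew hd
        · exact Or.inr ⟨tv, by simp, hτ.2 _ _ mv (by simp) d hmd hd⟩
      · rw [List.mem_append, List.mem_singleton]
        rintro (h | rfl)
        · exact hmv (ih d h mv (hR.2.1 _ _ hmd)).1
        · exact hR.1 _ hmd

theorem not_gameWinner_of_killed {R : Cell → Cell → Prop} (hR : TwoPaving R)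
    {F : Set (Set Cell)} (hF : ∀ Q ∈ F, Killed R Q) : ¬ GameWinner F := by
  rintro ⟨σ, hσ, hwin⟩
  obtain ⟨τ, hτ⟩ := hR.exists_pavingStrategy
  obtain ⟨n, Q, hQ, S, hS, hQS⟩ := hwin τ hτ.1
  obtain ⟨a, ha, b, hb, hab⟩ := hF Q hQ S hQS
  exact (hτ.related_marked hR hσ n a (hS ha) b hab).2 (hS hb)

theorem Killed.mono {R : Cell → Cell → Prop} {Q Q' : Set Cell} (h : Killed R Q)
    (hQ : Q ⊆ Q') : Killed R Q' := by
  rintro S ⟨f, hf, rfl⟩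
  obtain ⟨a, ha, b, hb, hab⟩ := h _ ⟨f, hf, rfl⟩
  exact ⟨a, Set.image_mono hQ ha, b, Set.image_mono hQ hb, hab⟩

theorem killed_triple {R : Cell → Cell → Prop} {x y z : Cell}
    (h : ∀ f, IsSym f → R (f x) (f y) ∨ R (f y) (f z)) : Killed R {x, y, z} := by
  rintro S ⟨f, hf, rfl⟩
  rcases h f hf with h | h
  · exact ⟨f x, by simp, f y, by simp, h⟩
  · exact ⟨f y, by simp, f z, by simp, h⟩

def evenDominoPaving (a b : Cell) : Prop :=
  (a.2 = b.2 ∧ a.1 / 2 = b.1 / 2 ∧ a.1 ≠ b.1) ∨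
    (a.1 = b.1 ∧ a.2 / 2 = b.2 / 2 ∧ a.2 ≠ b.2)

def horizontalPaving (a b : Cell) : Prop :=
  a.2 = b.2 ∧ (a.1 - b.1).natAbs = 1

theorem twoPaving_evenDominoPaving : TwoPaving evenDominoPaving := by
  refine ⟨fun a => by simp [evenDominoPaving], fun a b => by unfold evenDominoPaving; omega,
    fun a => ⟨(a.1 + 1 - 2 * (a.1 % 2), a.2), (a.1, a.2 + 1 - 2 * (a.2 % 2)), fun d hd => ?_⟩⟩
  simp only [evenDominoPaving, Prod.ext_iff] at hd ⊢
  omega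

theorem twoPaving_horizontalPaving : TwoPaving horizontalPaving := by
  refine ⟨fun a => by simp [horizontalPaving], fun a b => by unfold horizontalPaving; omega,
    fun a => ⟨(a.1 + 1, a.2), (a.1 - 1, a.2), fun d hd => ?_⟩⟩
  simp only [horizontalPaving, Prod.ext_iff] at hd ⊢
  omega

theorem evenDominoPaving_of_straight {x y z : Cell} (hyz : Adjacent y z)
    (hxz : x + z = y + y) : evenDominoPaving x y ∨ evenDominoPaving y z := by
  simp only [Adjacent, evenDominoPaving, Prod.ext_iff, Prod.fst_add, Prod.snd_add]
    at hyz hxz ⊢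
  omega

theorem horizontalPaving_of_bent {x y z : Cell} (hxy : Adjacent x y) (hyz : Adjacent y z)
    (hxz : x ≠ z) (hbent : x + z ≠ y + y) : horizontalPaving x y ∨ horizontalPaving y z := by
  simp only [Adjacent, horizontalPaving, ne_eq, Prod.ext_iff, Prod.fst_add, Prod.snd_add]
    at hxy hyz hxz hbent ⊢
  omega

theorem exists_twoPaving_killed_triple {x y z : Cell} (hxy : Adjacent x y) (hyz : Adjacent y z)
    (hxz : x ≠ z) : ∃ R, TwoPaving R ∧ Killed R {x, y, z} := by
  by_cases hstraight : x + z = y + y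
  · refine ⟨evenDominoPaving, twoPaving_evenDominoPaving, killed_triple fun f hf => ?_⟩
    exact evenDominoPaving_of_straight (hf.adjacent hyz) (hf.add_eq_add_iff.mpr hstraight)
  · refine ⟨horizontalPaving, twoPaving_horizontalPaving, killed_triple fun f hf => ?_⟩
    exact horizontalPaving_of_bent (hf.adjacent hxy) (hf.adjacent hyz) (hf.injective.ne hxz)
      (mt hf.add_eq_add_iff.mp hstraight)

theorem not_winner_singleton_of_triple {P : Set Cell} {x y z : Cell} (hx : x ∈ P) (hy : y ∈ P)
    (hz : z ∈ P) (hxy : Adjacent x y) (hyz : Adjacent y z) (hxz : x ≠ z) : ¬ Winner {P} := by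
  obtain ⟨R, hR, hkill⟩ := exists_twoPaving_killed_triple hxy hyz hxz
  have hsub : {x, y, z} ⊆ P := Set.insert_subset hx (Set.insert_subset hy
    (Set.singleton_subset_iff.mpr hz))
  rintro (⟨-, hwin⟩ | ⟨-, hwin⟩)
  · exact not_gameWinner_of_killed hR (by simpa using hkill.mono hsub) hwin
  · refine not_gameWinner_of_killed hR (by simpa using hkill) (hwin _ ⟨fun _ => {x, y, z}, ?_,
      (Set.image_singleton).symm⟩)
    rintro _ rfl
    refine ⟨Set.toFinite _, ?_, {x, y, z}, hsub, cellCongruent_refl _⟩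
    exact ((isPolyomino_singleton z).insert_of_adjacent rfl hyz).insert_of_adjacent
      (Set.mem_insert y _) hxy

theorem gameWinner_singleton_of_encard_le_two {P : Set Cell} (hP : IsPolyomino P)
    (h2 : P.encard ≤ 2) : GameWinner {P} := by
  refine ⟨neighbourMaker, neighbourMaker_legal, fun τ _ => ?_⟩
  obtain ⟨c, hc, d, hd, hcd⟩ := neighbourMaker_adjacent τ
  refine ⟨2, P, rfl, ?_⟩
  rcases hP.eq_singleton_or_pair h2 with ⟨p, rfl⟩ | ⟨p, q, hpq, rfl⟩
  · exact ⟨{c}, Set.singleton_subset_iff.mpr hc, cellCongruent_singleton p c⟩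
  · exact ⟨{c, d}, Set.insert_subset hc (Set.singleton_subset_iff.mpr hd),
      cellCongruent_pair hpq hcd⟩

/-- for every polyomino `P`, the singleton team `{P}` is a winner if and
only if `P` has size at most 2. -/
theorem stmt14 (P : Set Cell) (hP : IsPolyomino P) :
    Winner {P} ↔ P.encard ≤ 2 := by
  refine ⟨fun hwin => ?_, fun h2 => ?_⟩
  · by_contra! h3
    obtain ⟨x, hx, y, hy, z, hz, hxy, hyz, hxz⟩ := hP.exists_tromino h3
    exact not_winner_singleton_of_triple hx hy hz hxy hyz hxz hwin
  · refine Or.inl ⟨?_, gameWinner_singleton_of_encard_le_two hP h2⟩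
    simpa [Bounded] using Set.finite_of_encard_le_coe h2
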